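/- Let n ≥ 2 and write z = (z₁, z₂, z̃) ∈ ℂ × ℂ × ℂ^{n−2}. Let γ be a continuous real-valued function on an open neighbourhood of the closure of a ball V = B(0, s) ⊂ ℂ^n with γ > 0 there, and set ρ(z) = Re(z₁z₂) + |z₁|² γ(z), M = { z ∈ V : ρ(z) = 0 }, V⁻ = { z ∈ V : ρ(z) < 0 }, Σ = { z ∈ V : z₁ = 0 and z₂ = 0 }, and M* = M \ Σ. Suppose F is holomorphic on V⁻, f : M → ℂ is continuous, and F extends continuously to V⁻ ∪ M* with boundary values f, i.e., there is a continuous function G on V⁻ ∪ M* with G = F on V⁻ and G = f on M*. Then there exists 0 < s′ ≤ s such that for every w ∈ Σ with ‖w‖ < s′, F(z) → f(w) as z → w with z ∈ V⁻ ∩ B(0, s′). -/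

import Mathlib

/-!
On `V⁻` one has `ρ < 0`, hence `c |z₁|² < |z₁| |z₂|` where `c > 0` is the minimum of `γ` on the
closed ball, i.e. `|z₁| < |z₂| / c`. So for `z ∈ V⁻` the slice of `V⁻` by the complex line through
`z` in the `z₁`-direction (the disc `Δ(z)` of the paper) is a bounded domain within distance
`2|z₂|/c` of `z`; its boundary lies in `M`, and even in `M* = M \ Σ` because `z₂ ≠ 0` is fixed
along it. The maximum principle on that slice bounds `|F(z) - f(w)|` by the oscillation of `f` on
`M*` within distance `(1 + 2/c) |z - w|` of `w ∈ Σ`, which tends to `0` by continuity of `f` at `w`.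
-/

open Complex Metric Filter

noncomputable section

/-- The defining function `ρ(z) = Re(z₁ z₂) + |z₁|² γ(z)` on `ℂ^n` (`n = m + 2 ≥ 2`). -/
def rhoGamma (m : ℕ) (γ : EuclideanSpace ℂ (Fin (m + 2)) → ℝ)
    (z : EuclideanSpace ℂ (Fin (m + 2))) : ℝ :=
  (z 0 * z 1).re + ‖z 0‖ ^ 2 * γ z

/-- The one-sided domain `V⁻ = {z ∈ B(0,s) : ρ(z) < 0}`. -/
def Vminus (m : ℕ) (γ : EuclideanSpace ℂ (Fin (m + 2)) → ℝ) (s : ℝ) :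
    Set (EuclideanSpace ℂ (Fin (m + 2))) :=
  {z | z ∈ ball (0 : EuclideanSpace ℂ (Fin (m + 2))) s ∧ rhoGamma m γ z < 0}

/-- The hypersurface `M = {z ∈ B(0,s) : ρ(z) = 0}`. -/
def Mset (m : ℕ) (γ : EuclideanSpace ℂ (Fin (m + 2)) → ℝ) (s : ℝ) :
    Set (EuclideanSpace ℂ (Fin (m + 2))) :=
  {z | z ∈ ball (0 : EuclideanSpace ℂ (Fin (m + 2))) s ∧ rhoGamma m γ z = 0}

/-- The singular set `Σ = {z ∈ B(0,s) : z₁ = 0, z₂ = 0}`. -/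
def SigSet (m : ℕ) (s : ℝ) : Set (EuclideanSpace ℂ (Fin (m + 2))) :=
  {z | z ∈ ball (0 : EuclideanSpace ℂ (Fin (m + 2))) s ∧ z 0 = 0 ∧ z 1 = 0}

section CoordLine

variable {𝕜 ι : Type*} [RCLike 𝕜] [DecidableEq ι]

def coordLine (z : EuclideanSpace 𝕜 ι) (i : ι) (ζ : 𝕜) : EuclideanSpace 𝕜 ι :=
  z + (ζ - z i) • EuclideanSpace.single i 1

variable (z : EuclideanSpace 𝕜 ι) (i : ι)

@[simp]
lemma coordLine_apply_self (ζ : 𝕜) : coordLine z i ζ i = ζ := by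
  simp [coordLine]

@[simp]
lemma coordLine_apply_of_ne {j : ι} (hj : j ≠ i) (ζ : 𝕜) : coordLine z i ζ j = z j := by
  simp [coordLine, hj]

@[simp]
lemma coordLine_self : coordLine z i (z i) = z := by
  simp [coordLine]

lemma norm_coordLine_sub [Fintype ι] (ζ : 𝕜) : ‖coordLine z i ζ - z‖ = ‖ζ - z i‖ := by
  simp [coordLine, norm_smul]

lemma differentiable_coordLine [Fintype ι] : Differentiable 𝕜 (coordLine z i) :=
  (differentiable_const _).add ((differentiable_id.sub_const _).smul_const _)

end CoordLine

section Geometry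

variable {m : ℕ} {γ : EuclideanSpace ℂ (Fin (m + 2)) → ℝ} {s c : ℝ}
  {z : EuclideanSpace ℂ (Fin (m + 2))}

lemma rhoGamma_of_apply_zero_eq_zero (hz : z 0 = 0) : rhoGamma m γ z = 0 := by
  simp [rhoGamma, hz]

lemma mul_norm_lt_of_rhoGamma_neg (hρ : rhoGamma m γ z < 0) (hc : c ≤ γ z) :
    c * ‖z 0‖ < ‖z 1‖ := by
  have hz0 : 0 < ‖z 0‖ :=
    norm_pos_iff.mpr fun h => hρ.ne (rhoGamma_of_apply_zero_eq_zero h)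
  have hre : -(z 0 * z 1).re ≤ ‖z 0‖ * ‖z 1‖ :=
    (neg_le_abs _).trans ((abs_re_le_norm _).trans (norm_mul _ _).le)
  have hcγ : ‖z 0‖ ^ 2 * c ≤ ‖z 0‖ ^ 2 * γ z := by gcongr
  unfold rhoGamma at hρ
  nlinarith

lemma continuousOn_rhoGamma {S : Set (EuclideanSpace ℂ (Fin (m + 2)))} (hγ : ContinuousOn γ S) :
    ContinuousOn (rhoGamma m γ) S := by
  unfold rhoGamma
  fun_prop

lemma isOpen_Vminus (hγ : ContinuousOn γ (ball 0 s)) : IsOpen (Vminus m γ s) :=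
  (continuousOn_rhoGamma hγ).isOpen_inter_preimage isOpen_ball isOpen_Iio

lemma closure_Vminus_inter_ball_subset (hγ : ContinuousOn γ (ball 0 s)) :
    closure (Vminus m γ s) ∩ ball 0 s ⊆ Vminus m γ s ∪ Mset m γ s := by
  rintro x ⟨hxcl, hxs⟩
  have hρ : ContinuousWithinAt (rhoGamma m γ) (Vminus m γ s) x :=
    ((continuousOn_rhoGamma hγ).continuousAt (isOpen_ball.mem_nhds hxs)).continuousWithinAt
  have hle : rhoGamma m γ x ≤ 0 :=
    hρ.closure_le hxcl continuousWithinAt_const fun y hy => hy.2.le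
  exact hle.lt_or_eq.imp (fun h => ⟨hxs, h⟩) fun h => ⟨hxs, h⟩

lemma mul_norm_le_of_mem_closure_slice (hcγ : ∀ x ∈ ball 0 s, c ≤ γ x) {ζ : ℂ}
    (hζ : ζ ∈ closure (coordLine z 0 ⁻¹' Vminus m γ s)) : c * ‖ζ‖ ≤ ‖z 1‖ := by
  refine closure_minimal (fun ξ hξ => ?_)
    (isClosed_le (continuous_const.mul continuous_norm) continuous_const) hζ
  simpa using (mul_norm_lt_of_rhoGamma_neg hξ.2 (hcγ _ hξ.1)).le

lemma norm_coordLine_sub_le (hcγ : ∀ x ∈ ball 0 s, c ≤ γ x) (hc : 0 < c)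
    (hz : z ∈ Vminus m γ s) {ζ : ℂ} (hζ : ζ ∈ closure (coordLine z 0 ⁻¹' Vminus m γ s)) :
    ‖coordLine z 0 ζ - z‖ ≤ 2 / c * ‖z 1‖ := by
  have hζc := mul_norm_le_of_mem_closure_slice hcγ hζ
  have hzc := mul_norm_lt_of_rhoGamma_neg hz.2 (hcγ _ hz.1)
  rw [norm_coordLine_sub, div_mul_eq_mul_div, le_div_iff₀ hc]
  nlinarith [norm_sub_le ζ (z 0)]

end Geometry

theorem norm_sub_le_of_forall_mem_Mset_near {m : ℕ} {γ : EuclideanSpace ℂ (Fin (m + 2)) → ℝ}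
    {s c : ℝ} (hγ : ContinuousOn γ (ball 0 s)) (hc : 0 < c) (hcγ : ∀ x ∈ ball 0 s, c ≤ γ x)
    {G : EuclideanSpace ℂ (Fin (m + 2)) → ℂ} (hGd : DifferentiableOn ℂ G (Vminus m γ s))
    (hGc : ContinuousOn G (Vminus m γ s ∪ (Mset m γ s \ SigSet m s)))
    {z : EuclideanSpace ℂ (Fin (m + 2))} (hz : z ∈ Vminus m γ s) (hzs : ‖z‖ + 2 / c * ‖z 1‖ < s)
    {a : ℂ} {C : ℝ}
    (hC : ∀ x ∈ Mset m γ s \ SigSet m s, ‖x - z‖ ≤ 2 / c * ‖z 1‖ → ‖G x - a‖ ≤ C) :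
    ‖G z - a‖ ≤ C := by
  set φ := coordLine z 0
  set U := φ ⁻¹' Vminus m γ s
  have hφ : Differentiable ℂ φ := differentiable_coordLine z 0
  have hnear : ∀ ζ ∈ closure U, ‖φ ζ - z‖ ≤ 2 / c * ‖z 1‖ :=
    fun ζ hζ => norm_coordLine_sub_le hcγ hc hz hζ
  have hball : ∀ ζ ∈ closure U, φ ζ ∈ ball 0 s := fun ζ hζ => mem_ball_zero_iff.mpr <|
    (norm_le_norm_add_norm_sub' (φ ζ) z).trans_lt (by linarith [hnear ζ hζ])
  have hz1 : z 1 ≠ 0 := norm_pos_iff.mp <|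
    (mul_nonneg hc.le (norm_nonneg _)).trans_lt (mul_norm_lt_of_rhoGamma_neg hz.2 (hcγ z hz.1))
  have hfront : ∀ ζ ∈ frontier U, φ ζ ∈ Mset m γ s \ SigSet m s := by
    intro ζ hζ
    rw [((isOpen_Vminus hγ).preimage hφ.continuous).frontier_eq] at hζ
    have hcl : φ ζ ∈ closure (Vminus m γ s) := hφ.continuous.closure_preimage_subset _ hζ.1
    refine ⟨(closure_Vminus_inter_ball_subset hγ ⟨hcl, hball ζ hζ.1⟩).resolve_left hζ.2, ?_⟩
    exact fun hSig => hz1 (by simpa [φ] using hSig.2.2)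
  have hmaps : Set.MapsTo φ (closure U) (Vminus m γ s ∪ (Mset m γ s \ SigSet m s)) := by
    rw [closure_eq_self_union_frontier]
    rintro ζ (hζ | hζ)
    exacts [Or.inl hζ, Or.inr (hfront ζ hζ)]
  have hdc : DiffContOnCl ℂ (fun ζ => G (φ ζ) - a) U :=
    ⟨(hGd.comp hφ.differentiableOn (Set.mapsTo_preimage _ _)).sub_const a,
      (hGc.comp hφ.continuous.continuousOn hmaps).sub continuousOn_const⟩
  have hU : Bornology.IsBounded U := isBounded_iff_forall_norm_le.mpr
    ⟨‖z 1‖ / c, fun ζ hζ => (le_div_iff₀' hc).mpr (mul_norm_le_of_mem_closure_slice hcγ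
      (subset_closure hζ))⟩
  have hz0 : z 0 ∈ closure U := subset_closure (by simpa [U, φ] using hz)
  simpa [φ] using Complex.norm_le_of_forall_mem_frontier_norm_le hU hdc
    (fun ζ hζ => hC _ (hfront ζ hζ) (hnear ζ (frontier_subset_closure hζ))) hz0

theorem boundary_continuity_at_Sigma_general (m : ℕ) (s : ℝ) (hs : 0 < s)
    (W : Set (EuclideanSpace ℂ (Fin (m + 2))))
    (hWc : closure (ball (0 : EuclideanSpace ℂ (Fin (m + 2))) s) ⊆ W)
    (γ : EuclideanSpace ℂ (Fin (m + 2)) → ℝ)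
    (hγc : ContinuousOn γ W) (hγpos : ∀ z ∈ W, 0 < γ z)
    (F f G : EuclideanSpace ℂ (Fin (m + 2)) → ℂ)
    (hF : DifferentiableOn ℂ F (Vminus m γ s))
    (hf : ContinuousOn f (Mset m γ s))
    (hG : ContinuousOn G (Vminus m γ s ∪ (Mset m γ s \ SigSet m s)))
    (hGF : ∀ z ∈ Vminus m γ s, G z = F z)
    (hGf : ∀ z ∈ Mset m γ s \ SigSet m s, G z = f z) :
    ∃ s' : ℝ, 0 < s' ∧ s' ≤ s ∧
      ∀ w ∈ SigSet m s, ‖w‖ < s' →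
        Tendsto F (nhdsWithin w (Vminus m γ s ∩ ball 0 s')) (nhds (f w)) := by
  obtain ⟨c, hc, hcγ⟩ := isBounded_ball.isCompact_closure.exists_forall_le' (hγc.mono hWc)
    fun z hz => hγpos z (hWc hz)
  set K := 1 + 2 / c
  have hK : 1 ≤ K := le_add_of_nonneg_right (by positivity)
  refine ⟨s / K, by positivity, div_le_self hs.le hK, fun w ⟨hws, hw0, hw1⟩ _ => ?_⟩
  rw [Metric.tendsto_nhdsWithin_nhds]
  intro ε hε
  obtain ⟨δ, hδ, hfδ⟩ := Metric.continuousWithinAt_iff.mp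
    (hf w ⟨hws, rhoGamma_of_apply_zero_eq_zero hw0⟩) (ε / 2) (half_pos hε)
  refine ⟨δ / K, by positivity, fun z ⟨hzV, hzs⟩ hzw => ?_⟩
  have hz1 : ‖z 1‖ ≤ dist z w := by
    simpa [hw1, dist_eq_norm] using PiLp.norm_apply_le (z - w) 1
  have hKz : dist z w + 2 / c * ‖z 1‖ < δ := by
    calc _ ≤ K * dist z w := by nlinarith
      _ < δ := (lt_div_iff₀' (by positivity)).mp hzw
  have hzs' : ‖z‖ + 2 / c * ‖z 1‖ < s := by
    have hz1z := PiLp.norm_apply_le z 1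
    calc _ ≤ K * ‖z‖ := by nlinarith
      _ < s := (lt_div_iff₀' (by positivity)).mp (mem_ball_zero_iff.mp hzs)
  have hbound := norm_sub_le_of_forall_mem_Mset_near (hγc.mono (subset_closure.trans hWc)) hc
    (fun x hx => hcγ x (subset_closure hx)) (hF.congr hGF) hG hzV hzs' (a := f w) (C := ε / 2)
    fun x hx hxz => by
      rw [hGf x hx, ← dist_eq_norm]
      refine (hfδ hx.1 ?_).le
      linarith [dist_triangle x z w, dist_eq_norm x z]
  rw [dist_eq_norm, ← hGF z hzV]
  linarith

/-- Boundary regularity of the one-sided extension at the codimension-3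
singular set `Σ`: if `F` is holomorphic on `V⁻` and extends continuously to `V⁻ ∪ M*` with
boundary values `f`, then near the origin `F(z) → f(w)` as `z → w ∈ Σ` from `V⁻`. -/
theorem boundary_continuity_at_Sigma (m : ℕ) (s : ℝ) (hs : 0 < s)
    (W : Set (EuclideanSpace ℂ (Fin (m + 2)))) (hWo : IsOpen W)
    (hWc : closure (ball (0 : EuclideanSpace ℂ (Fin (m + 2))) s) ⊆ W)
    (γ : EuclideanSpace ℂ (Fin (m + 2)) → ℝ)
    (hγc : ContinuousOn γ W) (hγpos : ∀ z ∈ W, 0 < γ z)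
    (F f G : EuclideanSpace ℂ (Fin (m + 2)) → ℂ)
    (hF : DifferentiableOn ℂ F (Vminus m γ s))
    (hf : ContinuousOn f (Mset m γ s))
    (hG : ContinuousOn G (Vminus m γ s ∪ (Mset m γ s \ SigSet m s)))
    (hGF : ∀ z ∈ Vminus m γ s, G z = F z)
    (hGf : ∀ z ∈ Mset m γ s \ SigSet m s, G z = f z) :
    ∃ s' : ℝ, 0 < s' ∧ s' ≤ s ∧
      ∀ w ∈ SigSet m s, ‖w‖ < s' →
        Tendsto F (nhdsWithin w (Vminus m γ s ∩ ball 0 s')) (nhds (f w)) :=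
  boundary_continuity_at_Sigma_general m s hs W hWc γ hγc hγpos F f G hF hf hG hGF hGf
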